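/- If r is an odd multiple of 2 (i.e., r ≡ 2 (mod 4)) and c is odd, then one can place rc/4 + 1/2 = (rc+2)/4 pairwise non-bonding dominoes on the r×c board; that is, writing r = 2(2r'+1) and c = 2c'+1, there exists a set of (r'+1)(c'+1) + r'c' pairwise non-bonding dominoes on the r×c board, so D(r,c,(rc+2)/4) ≥ 1. -/
import Mathlib


/-- L1 (Manhattan) distance between two cells of the grid, via truncated
natural subtraction. -/
def cellDist (p q : ℕ × ℕ) : ℕ :=
  ((p.1 - q.1) + (q.1 - p.1)) + ((p.2 - q.2) + (q.2 - p.2))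

/-- A domino on the `r × c` board: a 2-element set of cells of
`{0,…,r−1} × {0,…,c−1}` whose two cells are at L1-distance 1. -/
def IsDomino (r c : ℕ) (dom : Finset (ℕ × ℕ)) : Prop :=
  dom.card = 2 ∧ (∀ p ∈ dom, p.1 < r ∧ p.2 < c) ∧
    ∀ p ∈ dom, ∀ q ∈ dom, p ≠ q → cellDist p q = 1

/-- Two dominoes are non-bonding if every cell of one is at L1-distance
at least 2 from every cell of the other. -/
def NonBonding (d₁ d₂ : Finset (ℕ × ℕ)) : Prop :=
  ∀ p ∈ d₁, ∀ q ∈ d₂, 2 ≤ cellDist p q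

/-- `nbD r c d` is the number of `d`-element sets of pairwise non-bonding
dominoes on the `r × c` board. -/
noncomputable def nbD (r c d : ℕ) : ℕ :=
  {S : Finset (Finset (ℕ × ℕ)) | S.card = d ∧ (∀ x ∈ S, IsDomino r c x) ∧
    ∀ x ∈ S, ∀ y ∈ S, x ≠ y → NonBonding x y}.ncard

namespace NbAux

def vdom (p : ℕ × ℕ) : Finset (ℕ × ℕ) := {p, (p.1 + 1, p.2)}

lemma mem_vdom {q p : ℕ × ℕ} : q ∈ vdom p ↔ q = p ∨ q = (p.1 + 1, p.2) := by
  simp [vdom]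

lemma ne_shift (p : ℕ × ℕ) : p ≠ (p.1 + 1, p.2) := by
  intro h
  have := congrArg Prod.fst h
  simp at this

lemma vdom_inj : Function.Injective vdom := by
  intro p q h
  have h1 : p ∈ vdom q := h ▸ mem_vdom.mpr (Or.inl rfl)
  have h2 : q ∈ vdom p := h.symm ▸ mem_vdom.mpr (Or.inl rfl)
  rcases mem_vdom.mp h1 with h1 | h1
  · exact h1
  · rcases mem_vdom.mp h2 with h2 | h2
    · exact h2.symm
    · exfalso
      have e1 := congrArg Prod.fst h1
      have e2 := congrArg Prod.fst h2
      simp at e1 e2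
      omega

def T (a b : ℕ) : Finset (ℕ × ℕ) :=
  ((Finset.range (a+1) ×ˢ Finset.range (b+1)).image (fun ij => (4*ij.1, 2*ij.2))) ∪
  ((Finset.range a ×ˢ Finset.range b).image (fun ij => (4*ij.1+2, 2*ij.2+1)))

lemma mem_T {a b : ℕ} {p : ℕ × ℕ} (h : p ∈ T a b) :
    (p.1 % 4 = 0 ∧ p.2 % 2 = 0 ∨ p.1 % 4 = 2 ∧ p.2 % 2 = 1) ∧
      p.1 + 1 < 4*a+2 ∧ p.2 < 2*b+1 := by
  simp only [T, Finset.mem_union, Finset.mem_image, Finset.mem_product,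
    Finset.mem_range] at h
  rcases h with ⟨⟨i, j⟩, ⟨hi, hj⟩, rfl⟩ | ⟨⟨i, j⟩, ⟨hi, hj⟩, rfl⟩ <;>
    dsimp only <;> omega

lemma card_T (a b : ℕ) : (T a b).card = (a+1)*(b+1) + a*b := by
  have inj1 : Function.Injective (fun ij : ℕ × ℕ => (4*ij.1, 2*ij.2)) := by
    intro p q h
    simp only [Prod.ext_iff] at h ⊢
    omega
  have inj2 : Function.Injective (fun ij : ℕ × ℕ => (4*ij.1+2, 2*ij.2+1)) := by
    intro p q h
    simp only [Prod.ext_iff] at h ⊢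
    omega
  have hdisj : Disjoint
      ((Finset.range (a+1) ×ˢ Finset.range (b+1)).image (fun ij => (4*ij.1, 2*ij.2)))
      ((Finset.range a ×ˢ Finset.range b).image (fun ij => (4*ij.1+2, 2*ij.2+1))) := by
    rw [Finset.disjoint_left]
    rintro p hp hq
    simp only [Finset.mem_image, Finset.mem_product, Finset.mem_range] at hp hq
    obtain ⟨⟨i, j⟩, _, rfl⟩ := hp
    obtain ⟨⟨i', j'⟩, _, h⟩ := hq
    have := congrArg Prod.snd h
    simp at this
    omega
  rw [T, Finset.card_union_of_disjoint hdisj,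
    Finset.card_image_of_injective _ inj1, Finset.card_image_of_injective _ inj2,
    Finset.card_product, Finset.card_product]
  simp [Finset.card_range]

lemma key (a b : ℕ) :
    ∃ S : Finset (Finset (ℕ × ℕ)), S.card = (a+1)*(b+1) + a*b ∧
      (∀ x ∈ S, IsDomino (4*a+2) (2*b+1) x) ∧
      (∀ x ∈ S, ∀ y ∈ S, x ≠ y → NonBonding x y) := by
  refine ⟨(T a b).image vdom, ?_, ?_, ?_⟩
  · rw [Finset.card_image_of_injective _ vdom_inj, card_T]
  · intro x hx
    obtain ⟨p, hp, rfl⟩ := Finset.mem_image.mp hx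
    obtain ⟨hmod, h1, h2⟩ := mem_T hp
    refine ⟨Finset.card_pair (ne_shift p), ?_, ?_⟩
    · intro q hq
      rcases mem_vdom.mp hq with rfl | rfl
      · exact ⟨by omega, h2⟩
      · exact show p.1 + 1 < 4*a+2 ∧ p.2 < 2*b+1 from ⟨h1, h2⟩
    · intro q hq q' hq' hne
      rcases mem_vdom.mp hq with rfl | rfl <;>
        rcases mem_vdom.mp hq' with rfl | rfl <;>
        simp [cellDist] at hne ⊢
  · intro x hx y hy hne
    obtain ⟨p, hp, rfl⟩ := Finset.mem_image.mp hx
    obtain ⟨q, hq, rfl⟩ := Finset.mem_image.mp hy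
    have hpq : p ≠ q := fun h => hne (by rw [h])
    obtain ⟨hmp, hp1, hp2⟩ := mem_T hp
    obtain ⟨hmq, hq1, hq2⟩ := mem_T hq
    have hpq' : p.1 ≠ q.1 ∨ p.2 ≠ q.2 := by
      by_contra h
      push_neg at h
      exact hpq (Prod.ext h.1 h.2)
    intro u hu v hv
    rcases mem_vdom.mp hu with rfl | rfl <;>
      rcases mem_vdom.mp hv with rfl | rfl <;>
      simp only [cellDist] <;> omega

end NbAux

theorem nbD_pos_of_two_mod_four (r c : ℕ) (hr : r % 4 = 2) (hc : c % 2 = 1) :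
    1 ≤ nbD r c ((r * c + 2) / 4) := by
  obtain ⟨a, rfl⟩ : ∃ a, r = 4*a+2 := ⟨r/4, by omega⟩
  obtain ⟨b, rfl⟩ : ∃ b, c = 2*b+1 := ⟨c/2, by omega⟩
  have hd : ((4*a+2) * (2*b+1) + 2) / 4 = (a+1)*(b+1) + a*b := by
    have h4 : (4*a+2) * (2*b+1) + 2 = 4 * ((a+1)*(b+1) + a*b) := by ring
    rw [h4, Nat.mul_div_cancel_left _ (by norm_num)]
  rw [nbD, hd]
  obtain ⟨S, hc, hdom, hnb⟩ := NbAux.key a b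
  set P : Set (Finset (Finset (ℕ × ℕ))) :=
    {S : Finset (Finset (ℕ × ℕ)) | S.card = (a+1)*(b+1) + a*b ∧
      (∀ x ∈ S, IsDomino (4*a+2) (2*b+1) x) ∧
      ∀ x ∈ S, ∀ y ∈ S, x ≠ y → NonBonding x y} with hP
  have hsub : P ⊆ ↑((Finset.range (4*a+2) ×ˢ Finset.range (2*b+1)).powerset.powerset) := by
    intro X hX
    obtain ⟨-, hXd, -⟩ := hX
    rw [Finset.mem_coe, Finset.mem_powerset]
    intro d hd
    rw [Finset.mem_powerset]
    intro p hp
    obtain ⟨-, hb, -⟩ := hXd d hd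
    obtain ⟨h1, h2⟩ := hb p hp
    simp [Finset.mem_product, h1, h2]
  have hfin : P.Finite :=
    Set.Finite.subset ((Finset.range (4*a+2) ×ˢ Finset.range (2*b+1)).powerset.powerset).finite_toSet hsub
  have hmem : S ∈ P := ⟨hc, hdom, hnb⟩
  exact (Set.ncard_pos hfin).mpr ⟨S, hmem⟩
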